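/- Let Z_i, Z_j : [0,1] → ℝ and let A(s,t) be defined for all dyadic 0 ≤ s ≤ t ≤ 1 and satisfy the Chen relation A(r,t) = A(r,s) + A(s,t) + (Z_i(s)−Z_i(r))(Z_j(t)−Z_j(s)) for all dyadic r ≤ s ≤ t. Then for every n ≥ 0, every 0 ≤ k < 2^n and every m > n: A(t_k^n, t_{k+1}^n) = Σ_{h=n+1}^{m} Σ_{l=1}^{2^{h−n−1}} (Z_i(t^h_{2^{h−n}k+2l−1}) − Z_i(t^h_{2^{h−n}k+2l−2}))·(Z_j(t^h_{2^{h−n}k+2l}) − Z_j(t^h_{2^{h−n}k+2l−1})) + Σ_{l=1}^{2^{m−n}} A(t^m_{2^{m−n}k+l−1}, t^m_{2^{m−n}k+l}). Consequently, if the remainder Σ_{l=1}^{2^{m−n}} A(t^m_{2^{m−n}k+l−1}, t^m_{2^{m−n}k+l}) tends to 0 as m → ∞, then A(t_k^n, t_{k+1}^n) = Σ_{h=n+1}^{∞} Σ_{l=1}^{2^{h−n−1}} (Z_i(t^h_{2^{h−n}k+2l−1}) − Z_i(t^h_{2^{h−n}k+2l−2}))·(Z_j(t^h_{2^{h−n}k+2l})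 − Z_j(t^h_{2^{h−n}k+2l−1})). -/
import Mathlib


open Filter Finset

/-- Dyadic rationals in `[0,1]`: points of the form `k / 2^n` with `0 ≤ k ≤ 2^n`. -/
def IsDyadic (x : ℝ) : Prop := ∃ n k : ℕ, k ≤ 2 ^ n ∧ x = (k : ℝ) / 2 ^ n

/-- The level-`h` sum of products of consecutive increments appearing in the Lévy area
expansion of `A(t_k^n, t_{k+1}^n)`:
`Σ_{l=1}^{2^{h−n−1}} (Z_i(t^h_{2^{h−n}k+2l−1}) − Z_i(t^h_{2^{h−n}k+2l−2}))
                     (Z_j(t^h_{2^{h−n}k+2l}) − Z_j(t^h_{2^{h−n}k+2l−1}))`. -/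
noncomputable def levelSum (Zi Zj : ℝ → ℝ) (n k h : ℕ) : ℝ :=
  ∑ l ∈ Finset.Icc 1 (2 ^ (h - n - 1)),
    (Zi (((2 ^ (h - n) * k + 2 * l - 1 : ℕ) : ℝ) / 2 ^ h) -
      Zi (((2 ^ (h - n) * k + 2 * l - 2 : ℕ) : ℝ) / 2 ^ h)) *
    (Zj (((2 ^ (h - n) * k + 2 * l : ℕ) : ℝ) / 2 ^ h) -
      Zj (((2 ^ (h - n) * k + 2 * l - 1 : ℕ) : ℝ) / 2 ^ h))

/-- The level-`m` remainder in the Lévy area expansion: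
`Σ_{l=1}^{2^{m−n}} A(t^m_{2^{m−n}k+l−1}, t^m_{2^{m−n}k+l})`. -/
noncomputable def remainderSum (A : ℝ → ℝ → ℝ) (n k m : ℕ) : ℝ :=
  ∑ l ∈ Finset.Icc 1 (2 ^ (m - n)),
    A (((2 ^ (m - n) * k + l - 1 : ℕ) : ℝ) / 2 ^ m) (((2 ^ (m - n) * k + l : ℕ) : ℝ) / 2 ^ m)

lemma isDyadic_div (m x : ℕ) (hx : x ≤ 2 ^ m) : IsDyadic ((x : ℝ) / 2 ^ m) :=
  ⟨m, x, hx, rfl⟩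

lemma sum_range_two_mul (N : ℕ) (g : ℕ → ℝ) :
    ∑ i ∈ Finset.range (2 * N), g i = ∑ j ∈ Finset.range N, (g (2 * j) + g (2 * j + 1)) := by
  induction N with
  | zero => simp
  | succ N ih =>
    have h : 2 * (N + 1) = (2 * N + 1) + 1 := by ring
    rw [h, Finset.sum_range_succ, Finset.sum_range_succ, Finset.sum_range_succ, ih]
    ring

lemma remainderSum_eq (A : ℝ → ℝ → ℝ) (n k m : ℕ) :
    remainderSum A n k m = ∑ i ∈ Finset.range (2 ^ (m - n)),
      A (((2 ^ (m - n) * k + i : ℕ) : ℝ) / 2 ^ m) (((2 ^ (m - n) * k + i + 1 : ℕ) : ℝ) / 2 ^ m) := by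
  unfold remainderSum
  rw [← Finset.Ico_add_one_right_eq_Icc, Finset.sum_Ico_eq_sum_range]
  apply Finset.sum_congr (by congr 1)
  intro i _
  have h1 : 2 ^ (m - n) * k + (1 + i) - 1 = 2 ^ (m - n) * k + i := by omega
  have h2 : 2 ^ (m - n) * k + (1 + i) = 2 ^ (m - n) * k + i + 1 := by omega
  rw [h1, h2]

lemma levelSum_eq (Zi Zj : ℝ → ℝ) (n k h : ℕ) :
    levelSum Zi Zj n k h = ∑ j ∈ Finset.range (2 ^ (h - n - 1)),
      (Zi (((2 ^ (h - n) * k + 2 * j + 1 : ℕ) : ℝ) / 2 ^ h) -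
        Zi (((2 ^ (h - n) * k + 2 * j : ℕ) : ℝ) / 2 ^ h)) *
      (Zj (((2 ^ (h - n) * k + 2 * j + 2 : ℕ) : ℝ) / 2 ^ h) -
        Zj (((2 ^ (h - n) * k + 2 * j + 1 : ℕ) : ℝ) / 2 ^ h)) := by
  unfold levelSum
  rw [← Finset.Ico_add_one_right_eq_Icc, Finset.sum_Ico_eq_sum_range]
  apply Finset.sum_congr (by congr 1)
  intro j _
  have h1 : 2 ^ (h - n) * k + 2 * (1 + j) - 1 = 2 ^ (h - n) * k + 2 * j + 1 := by omega
  have h2 : 2 ^ (h - n) * k + 2 * (1 + j) - 2 = 2 ^ (h - n) * k + 2 * j := by omega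
  have h3 : 2 ^ (h - n) * k + 2 * (1 + j) = 2 ^ (h - n) * k + 2 * j + 2 := by omega
  rw [h1, h2, h3]

lemma half_cast (m x : ℕ) : ((2 * x : ℕ) : ℝ) / 2 ^ (m + 1) = ((x : ℕ) : ℝ) / 2 ^ m := by
  rw [pow_succ]
  push_cast
  ring

lemma idx_le (n k m x : ℕ) (hk : k < 2 ^ n) (hm : n ≤ m) (hx : x ≤ 2 ^ (m - n)) :
    2 ^ (m - n) * k + x ≤ 2 ^ m := by
  have h2m : 2 ^ (m - n) * 2 ^ n = 2 ^ m := by rw [← pow_add]; congr 1; omega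
  calc 2 ^ (m - n) * k + x ≤ 2 ^ (m - n) * k + 2 ^ (m - n) := by omega
    _ = 2 ^ (m - n) * (k + 1) := by ring
    _ ≤ 2 ^ m := by rw [← h2m]; exact Nat.mul_le_mul_left _ hk

lemma step (Zi Zj : ℝ → ℝ) (A : ℝ → ℝ → ℝ)
    (hChen : ∀ r s t : ℝ, IsDyadic r → IsDyadic s → IsDyadic t → r ≤ s → s ≤ t →
      A r t = A r s + A s t + (Zi s - Zi r) * (Zj t - Zj s))
    (n k : ℕ) (hk : k < 2 ^ n) (m : ℕ) (hm : n ≤ m) :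
    remainderSum A n k m = levelSum Zi Zj n k (m + 1) + remainderSum A n k (m + 1) := by
  have hs1 : m + 1 - n = (m - n) + 1 := by omega
  have hs2 : m + 1 - n - 1 = m - n := by omega
  rw [remainderSum_eq, remainderSum_eq, levelSum_eq, hs2, hs1, pow_succ,
    mul_comm (2 ^ (m - n)) 2, sum_range_two_mul, ← Finset.sum_add_distrib]
  apply Finset.sum_congr rfl
  intro i hi
  have hi' : i < 2 ^ (m - n) := Finset.mem_range.mp hi
  set N := 2 ^ (m - n) with hN
  have hb : ∀ x : ℕ, x ≤ 2 * N → 2 * N * k + x ≤ 2 ^ (m + 1) := by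
    intro x hx
    have h : 2 ^ (m + 1 - n) = 2 * N := by rw [hs1, pow_succ, mul_comm]
    have := idx_le n k (m + 1) x hk (by omega) (by rw [h]; exact hx)
    rwa [h] at this
  have key := hChen (((2 * N * k + 2 * i : ℕ) : ℝ) / 2 ^ (m + 1))
    (((2 * N * k + 2 * i + 1 : ℕ) : ℝ) / 2 ^ (m + 1))
    (((2 * N * k + 2 * i + 2 : ℕ) : ℝ) / 2 ^ (m + 1))
    (isDyadic_div _ _ (hb (2 * i) (by omega))) (isDyadic_div _ _ (hb (2 * i + 1) (by omega)))
    (isDyadic_div _ _ (hb (2 * i + 2) (by omega)))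
    ((div_le_div_iff_of_pos_right (by positivity)).mpr (by exact_mod_cast by omega))
    ((div_le_div_iff_of_pos_right (by positivity)).mpr (by exact_mod_cast by omega))
  have e1 : ((2 * N * k + 2 * i : ℕ) : ℝ) / 2 ^ (m + 1) = ((N * k + i : ℕ) : ℝ) / 2 ^ m := by
    rw [show 2 * N * k + 2 * i = 2 * (N * k + i) by ring, half_cast]
  have e2 : ((2 * N * k + 2 * i + 2 : ℕ) : ℝ) / 2 ^ (m + 1) =
      ((N * k + i + 1 : ℕ) : ℝ) / 2 ^ m := by
    rw [show 2 * N * k + 2 * i + 2 = 2 * (N * k + i + 1) by ring, half_cast]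
  rw [e1, e2] at key
  rw [key]
  push_cast
  ring_nf

/-- **Lemma (dyadic expansion of the Lévy area).**
If `A` satisfies Chen's relation with respect to `Z_i, Z_j` at dyadic points, then for every
`n`, `k < 2ⁿ` and `m > n`,
`A(t_k^n, t_{k+1}^n) = Σ_{h=n+1}^m levelSum(h) + remainderSum(m)`; consequently, if the
remainder tends to `0` as `m → ∞`, then `A(t_k^n, t_{k+1}^n) = Σ_{h=n+1}^∞ levelSum(h)`. -/
theorem levy_area_dyadic_expansion
    (Zi Zj : ℝ → ℝ) (A : ℝ → ℝ → ℝ)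
    (hChen : ∀ r s t : ℝ, IsDyadic r → IsDyadic s → IsDyadic t → r ≤ s → s ≤ t →
      A r t = A r s + A s t + (Zi s - Zi r) * (Zj t - Zj s))
    (n k : ℕ) (hk : k < 2 ^ n) :
    (∀ m : ℕ, n < m →
      A ((k : ℝ) / 2 ^ n) (((k : ℝ) + 1) / 2 ^ n) =
        (∑ h ∈ Finset.Icc (n + 1) m, levelSum Zi Zj n k h) + remainderSum A n k m) ∧
    (Tendsto (fun m : ℕ => remainderSum A n k m) atTop (nhds 0) →
      Tendsto (fun m : ℕ => ∑ h ∈ Finset.Icc (n + 1) m, levelSum Zi Zj n k h) atTop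
        (nhds (A ((k : ℝ) / 2 ^ n) (((k : ℝ) + 1) / 2 ^ n)))) := by
  have key : ∀ m : ℕ, n ≤ m →
      A ((k : ℝ) / 2 ^ n) (((k : ℝ) + 1) / 2 ^ n) =
        (∑ h ∈ Finset.Icc (n + 1) m, levelSum Zi Zj n k h) + remainderSum A n k m := by
    intro m hm
    induction m, hm using Nat.le_induction with
    | base =>
      rw [Finset.Icc_eq_empty (by omega), Finset.sum_empty, zero_add, remainderSum_eq]
      simp only [Nat.sub_self, pow_zero, one_mul, Finset.range_one, Finset.sum_singleton]
      push_cast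
      norm_num
    | succ m hm ih =>
      rw [Finset.sum_Icc_succ_top (by omega : n + 1 ≤ m + 1), ih,
        step Zi Zj A hChen n k hk m hm]
      ring
  refine ⟨fun m hm => key m (le_of_lt hm), fun hrem => ?_⟩
  have h1 : Tendsto (fun m : ℕ =>
      A ((k : ℝ) / 2 ^ n) (((k : ℝ) + 1) / 2 ^ n) - remainderSum A n k m) atTop
      (nhds (A ((k : ℝ) / 2 ^ n) (((k : ℝ) + 1) / 2 ^ n) - 0)) :=
    tendsto_const_nhds.sub hrem
  rw [sub_zero] at h1
  refine h1.congr' ?_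
  filter_upwards [eventually_ge_atTop n] with m hm
  have := key m hm
  linarith
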